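/- (Lemma 4, first estimate, concrete form) Suppose all partial derivatives D^{(α,β)}κ = ∂^{α+β}κ/∂s^α∂t^β with 0 ≤ α+β ≤ 2r+3 exist, are continuous on [0,1]×[0,1], and satisfy |D^{(α,β)}κ(s,t)| ≤ C₂. Then there exists a constant C > 0, independent of n, such that for every continuous ψ : [0,1] → ℝ, ‖K(Kψ) − Q_n(K(Kψ))‖_∞ ≤ C ‖ψ‖_∞ h^{2r+1}. -/

import Mathlib

open Set MeasureTheory

/-- Equidistant interpolation nodes: `τ_j^i = t_{j-1} + i·h/(2r)` with `h = 1/n`. -/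
noncomputable def tau (n r j i : ℕ) : ℝ :=
  ((j : ℝ) - 1) / n + (i : ℝ) / (2 * r * n)

/-- The unique polynomial of degree ≤ 2r interpolating `x` at the nodes of `Δ_j`. -/
noncomputable def interpPoly (n r j : ℕ) (x : ℝ → ℝ) : Polynomial ℝ :=
  Lagrange.interpolate (Finset.range (2 * r + 1)) (tau n r j) (fun i => x (tau n r j i))

/-- The interpolatory projection `Q_n x`: on each subinterval `Δ_j = [(j-1)/n, j/n]` it
coincides with the polynomial of degree ≤ 2r interpolating `x` at the nodes `τ_j^i`.
(At a partition point both adjacent pieces take the value `x(t_j)`.) -/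
noncomputable def Qn (n r : ℕ) (x : ℝ → ℝ) (t : ℝ) : ℝ :=
  (interpPoly n r (min n (⌊t * (n : ℝ)⌋₊ + 1)) x).eval t

/-- The Fredholm integral operator with kernel `κ`. -/
noncomputable def Kop (κ : ℝ → ℝ → ℝ) (x : ℝ → ℝ) (s : ℝ) : ℝ :=
  ∫ t in (0:ℝ)..1, κ s t * x t

/-- Supremum norm on `[0,1]`. -/
noncomputable def supNorm (f : ℝ → ℝ) : ℝ :=
  ⨆ t : Set.Icc (0:ℝ) 1, |f t.1|

/-- The nodal polynomial `Φ_j(t) = ∏_{i=0}^{2r} (t − τ_j^i)`. -/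
noncomputable def Phi (n r j : ℕ) (t : ℝ) : ℝ :=
  ∏ i ∈ Finset.range (2 * r + 1), (t - tau n r j i)

/-- `‖x‖_{k,∞} = max_{0 ≤ i ≤ k} ‖x^{(i)}‖_∞` (derivatives taken within `[0,1]`). -/
noncomputable def cknorm (k : ℕ) (x : ℝ → ℝ) : ℝ :=
  ⨆ i : Fin (k + 1), supNorm (iteratedDerivWithin i x (Set.Icc 0 1))

/-!
Write `y = Kψ`. On the subinterval `Δ_j` containing `s`, interpolation commutes with integration
in `u`, so `K y (s) - Q_n (K y) (s) = ∫ (κ(s,u) - (Q_n κ(·,u))(s)) y(u) du`, and it suffices to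
bound the interpolation error of the kernel in its first variable uniformly in `u`. That error is
controlled by a Lebesgue-constant argument: the Taylor polynomial of degree `2r` of `κ(·,u)` at
`t_{j-1}` approximates it on `Δ_j` within `C₂ h^{2r+1}` and is reproduced by the interpolation,
while each Lagrange basis polynomial for nodes spaced `h/(2r)` apart is bounded by `(2r)^{2r}` on
`Δ_j`. Finally `|y| ≤ C₂ ‖ψ‖_∞`.
-/

lemma abs_le_supNorm {f : ℝ → ℝ} (hf : ContinuousOn f (Icc 0 1)) {u : ℝ}
    (hu : u ∈ Icc (0 : ℝ) 1) : |f u| ≤ supNorm f := by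
  refine le_ciSup (f := fun t : Icc (0 : ℝ) 1 => |f t.1|) ?_ ⟨u, hu⟩
  simpa only [Set.image_eq_range] using (isCompact_Icc.image_of_continuousOn hf.abs).bddAbove

lemma supNorm_nonneg (f : ℝ → ℝ) : 0 ≤ supNorm f :=
  Real.iSup_nonneg fun _ => abs_nonneg _

lemma supNorm_le {f : ℝ → ℝ} {M : ℝ} (hM : 0 ≤ M) (hf : ∀ u ∈ Icc (0 : ℝ) 1, |f u| ≤ M) :
    supNorm f ≤ M :=
  Real.iSup_le (fun t => hf t.1 t.2) hM

lemma abs_intervalIntegral_mul_le {f g : ℝ → ℝ} {A B : ℝ}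
    (hf : ∀ u ∈ Icc (0 : ℝ) 1, |f u| ≤ A) (hg : ∀ u ∈ Icc (0 : ℝ) 1, |g u| ≤ B) :
    |∫ u in (0 : ℝ)..1, f u * g u| ≤ A * B := by
  have hA : 0 ≤ A := (abs_nonneg _).trans (hf 0 ⟨le_rfl, zero_le_one⟩)
  have := intervalIntegral.norm_integral_le_of_norm_le_const (a := 0) (b := 1)
    (f := fun u => f u * g u) (C := A * B) fun u hu => by
      rw [Set.uIoc_of_le zero_le_one] at hu
      rw [Real.norm_eq_abs, abs_mul]
      exact mul_le_mul (hf u (Ioc_subset_Icc_self hu)) (hg u (Ioc_subset_Icc_self hu))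
        (abs_nonneg _) hA
  simpa using this

lemma continuousOn_Kop {κ : ℝ → ℝ → ℝ} {x : ℝ → ℝ}
    (hκ : ContinuousOn (fun q : ℝ × ℝ => κ q.1 q.2) (Icc 0 1 ×ˢ Icc 0 1))
    (hx : ContinuousOn x (Icc 0 1)) : ContinuousOn (Kop κ x) (Icc 0 1) := by
  -- extend the integrand continuously to the whole plane by clamping both variables to `[0,1]`
  set p : ℝ → ℝ := fun s => projIcc (0 : ℝ) 1 zero_le_one s
  have hp : Continuous p := continuous_subtype_val.comp continuous_projIcc
  have hpI : ∀ s, p s ∈ Icc (0 : ℝ) 1 := fun s => (projIcc 0 1 zero_le_one s).2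
  have hF : Continuous (Function.uncurry fun s t => κ (p s) (p t) * x (p t)) :=
    (hκ.comp_continuous (hp.prodMap hp) fun q => ⟨hpI q.1, hpI q.2⟩).mul
      (hx.comp_continuous (hp.comp continuous_snd) fun q => hpI q.2)
  refine (intervalIntegral.continuous_parametric_intervalIntegral_of_continuous' (μ := volume)
    hF 0 1).continuousOn.congr fun s hs => ?_
  refine intervalIntegral.integral_congr fun t ht => ?_
  rw [Set.uIcc_of_le zero_le_one] at ht
  simp only [p, projIcc_of_mem _ hs, projIcc_of_mem _ ht]

section Interpolation

open Polynomial

variable {ι : Type*} [DecidableEq ι] {s : Finset ι} {v : ι → ℝ}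

lemma eval_interpolate (r : ι → ℝ) (x : ℝ) :
    (Lagrange.interpolate s v r).eval x = ∑ i ∈ s, r i * (Lagrange.basis s v i).eval x := by
  simp [Lagrange.interpolate_apply, eval_finsetSum]

lemma abs_eval_basis_le {δ D x : ℝ} (hδ : 0 < δ)
    (hsep : ∀ i ∈ s, ∀ k ∈ s, i ≠ k → δ ≤ |v i - v k|) (hx : ∀ k ∈ s, |x - v k| ≤ D)
    {i : ι} (hi : i ∈ s) : |(Lagrange.basis s v i).eval x| ≤ (D / δ) ^ (s.card - 1) := by
  rw [Lagrange.basis, eval_prod, Finset.abs_prod, ← Finset.card_erase_of_mem hi,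
    ← Finset.prod_const]
  refine Finset.prod_le_prod (fun _ _ => abs_nonneg _) fun k hk => ?_
  obtain ⟨hki, hk⟩ := Finset.mem_erase.1 hk
  have hδik := hsep i hi k hk hki.symm
  simp only [Lagrange.basisDivisor, eval_mul, eval_C, eval_sub, eval_X, abs_mul, abs_inv]
  rw [inv_mul_eq_div]
  calc |x - v k| / |v i - v k| ≤ D / |v i - v k| := by gcongr; exact hx k hk
    _ ≤ D / δ := by
      have hD : 0 ≤ D := (abs_nonneg _).trans (hx k hk)
      gcongr

lemma abs_sub_eval_interpolate_le (hv : Set.InjOn v s) {f : ℝ → ℝ} {P : ℝ[X]}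
    (hP : P.degree < s.card) {I : Set ℝ} {ε Λ x : ℝ} (hvI : ∀ i ∈ s, v i ∈ I) (hx : x ∈ I)
    (hfP : ∀ u ∈ I, |f u - P.eval u| ≤ ε) (hΛ : ∀ i ∈ s, |(Lagrange.basis s v i).eval x| ≤ Λ) :
    |f x - (Lagrange.interpolate s v fun i => f (v i)).eval x| ≤ (1 + s.card * Λ) * ε := by
  have hε : 0 ≤ ε := (abs_nonneg _).trans (hfP x hx)
  have hPx : P.eval x = ∑ i ∈ s, P.eval (v i) * (Lagrange.basis s v i).eval x := by
    rw [← eval_interpolate, ← Lagrange.eq_interpolate hv hP]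
  have hsplit : f x - (Lagrange.interpolate s v fun i => f (v i)).eval x =
      (f x - P.eval x) + ∑ i ∈ s, (P.eval (v i) - f (v i)) * (Lagrange.basis s v i).eval x := by
    simp only [eval_interpolate, sub_mul, Finset.sum_sub_distrib, ← hPx]
    ring
  calc |f x - (Lagrange.interpolate s v fun i => f (v i)).eval x|
      ≤ |f x - P.eval x| + ∑ i ∈ s, |(P.eval (v i) - f (v i)) * (Lagrange.basis s v i).eval x| := by
        rw [hsplit]
        exact (abs_add_le _ _).trans (add_le_add_right (Finset.abs_sum_le_sum_abs _ _) _)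
    _ ≤ ε + ∑ _i ∈ s, ε * Λ := by
        refine add_le_add (hfP x hx) (Finset.sum_le_sum fun i hi => ?_)
        rw [abs_mul, abs_sub_comm]
        exact mul_le_mul (hfP _ (hvI i hi)) (hΛ i hi) (abs_nonneg _) hε
    _ = (1 + s.card * Λ) * ε := by rw [Finset.sum_const, nsmul_eq_mul]; ring

end Interpolation

section Kernel

variable {κ : ℝ → ℝ → ℝ} {y : ℝ → ℝ}

lemma intervalIntegrable_kernel_mul
    (hκ : ContinuousOn (fun q : ℝ × ℝ => κ q.1 q.2) (Icc 0 1 ×ˢ Icc 0 1))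
    (hy : ContinuousOn y (Icc 0 1)) {w : ℝ} (hw : w ∈ Icc (0 : ℝ) 1) :
    IntervalIntegrable (fun u => κ w u * y u) volume 0 1 := by
  refine ContinuousOn.intervalIntegrable ?_
  rw [uIcc_of_le zero_le_one]
  exact (hκ.comp (continuous_const.prodMk continuous_id).continuousOn fun u hu => ⟨hw, hu⟩).mul hy

lemma Kop_sub_eval_interpolate {ι : Type*} [DecidableEq ι] {s : Finset ι} {v : ι → ℝ}
    (hκ : ContinuousOn (fun q : ℝ × ℝ => κ q.1 q.2) (Icc 0 1 ×ˢ Icc 0 1))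
    (hy : ContinuousOn y (Icc 0 1)) (hv : ∀ i ∈ s, v i ∈ Icc (0 : ℝ) 1) {x : ℝ}
    (hx : x ∈ Icc (0 : ℝ) 1) :
    Kop κ y x - (Lagrange.interpolate s v fun i => Kop κ y (v i)).eval x =
      ∫ u in (0 : ℝ)..1, (κ x u - (Lagrange.interpolate s v fun i => κ (v i) u).eval x) * y u := by
  have hint : ∀ i ∈ s, IntervalIntegrable
      (fun u => κ (v i) u * y u * (Lagrange.basis s v i).eval x) volume 0 1 :=
    fun i hi => (intervalIntegrable_kernel_mul hκ hy (hv i hi)).mul_const _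
  have hsum : IntervalIntegrable
      (fun u => ∑ i ∈ s, κ (v i) u * y u * (Lagrange.basis s v i).eval x) volume 0 1 := by
    simpa only [Finset.sum_fn] using IntervalIntegrable.sum s hint
  simp only [Kop, eval_interpolate, ← intervalIntegral.integral_mul_const]
  rw [← intervalIntegral.integral_finsetSum hint,
    ← intervalIntegral.integral_sub (intervalIntegrable_kernel_mul hκ hy hx) hsum]
  refine intervalIntegral.integral_congr fun u _ => ?_
  simp only [sub_mul, Finset.sum_mul]
  congr 1
  exact Finset.sum_congr rfl fun i _ => by ring

end Kernel

section Taylor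

open Polynomial

lemma exists_degree_lt_abs_sub_eval_le {f : ℝ → ℝ} {a b M : ℝ} {m : ℕ} (hab : a ≤ b)
    (hf : ContDiffOn ℝ (m + 1) f (Icc a b))
    (hM : ∀ x ∈ Icc a b, |iteratedDerivWithin (m + 1) f (Icc a b) x| ≤ M) :
    ∃ P : ℝ[X], P.degree < (m + 1 : ℕ) ∧
      ∀ x ∈ Icc a b, |f x - P.eval x| ≤ M * (b - a) ^ (m + 1) := by
  -- the Taylor polynomial of `f` at `a`
  refine ⟨∑ k ∈ Finset.range (m + 1),
    C (iteratedDerivWithin k f (Icc a b) a / k.factorial) * (X - C a) ^ k, ?_, fun x hx => ?_⟩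
  · refine (degree_le_natDegree).trans_lt (WithBot.coe_lt_coe.2 (Nat.lt_succ_of_le ?_))
    refine natDegree_sum_le_of_forall_le _ _ fun k hk => ?_
    exact (natDegree_C_mul_le _ _).trans ((natDegree_pow_le_of_le _ (natDegree_X_sub_C_le _)).trans
      (by simpa [Nat.lt_succ_iff] using hk))
  have hM0 : 0 ≤ M := (abs_nonneg _).trans (hM a ⟨le_rfl, hab⟩)
  have hTaylor := taylor_mean_remainder_bound hab hf hx fun y hy => hM y hy
  have hP : (∑ k ∈ Finset.range (m + 1),
      C (iteratedDerivWithin k f (Icc a b) a / k.factorial) * (X - C a) ^ k).eval x =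
      taylorWithinEval f m (Icc a b) a x := by
    rw [taylor_within_apply, eval_finsetSum]
    refine Finset.sum_congr rfl fun k _ => ?_
    simp only [eval_mul, eval_C, eval_pow, eval_sub, eval_X, smul_eq_mul]
    ring
  rw [hP]
  calc |f x - taylorWithinEval f m (Icc a b) a x| ≤ M * (x - a) ^ (m + 1) / m.factorial :=
        hTaylor
    _ ≤ M * (x - a) ^ (m + 1) := div_le_self (by have := hx.1; positivity)
        (by exact_mod_cast Nat.one_le_iff_ne_zero.2 (Nat.factorial_ne_zero m))
    _ ≤ M * (b - a) ^ (m + 1) := by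
        have := hx.1
        gcongr
        exact hx.2

end Taylor

lemma iteratedDerivWithin_eqOn_of_hasDerivWithinAt_succ {s : Set ℝ} (hs : UniqueDiffOn ℝ s)
    {m : ℕ} {f : ℕ → ℝ → ℝ} (hf : ∀ k < m, ∀ x ∈ s, HasDerivWithinAt (f k) (f (k + 1) x) s x) :
    ∀ k ≤ m, EqOn (iteratedDerivWithin k (f 0) s) (f k) s := by
  intro k
  induction k with
  | zero => intro _ x _; simp
  | succ k ih =>
    intro hk x hx
    rw [iteratedDerivWithin_succ, derivWithin_congr (ih (by omega)) (ih (by omega) hx)]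
    exact (hf k (by omega) x hx).derivWithin (hs x hx)

lemma contDiffOn_of_hasDerivWithinAt_succ {s : Set ℝ} (hs : UniqueDiffOn ℝ s) {m : ℕ}
    {f : ℕ → ℝ → ℝ} (hf : ∀ k < m, ∀ x ∈ s, HasDerivWithinAt (f k) (f (k + 1) x) s x)
    (hcont : ContinuousOn (f m) s) : ContDiffOn ℝ m (f 0) s := by
  induction m generalizing f with
  | zero => simpa using hcont
  | succ m ih =>
    rw [Nat.cast_add, Nat.cast_one, contDiffOn_succ_iff_derivWithin hs]
    refine ⟨fun x hx => (hf 0 (by omega) x hx).differentiableWithinAt, by simp, ?_⟩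
    refine (ih (f := fun k => f (k + 1)) (fun k hk x hx => hf (k + 1) (by omega) x hx)
      hcont).congr fun x hx => (hf 0 (by omega) x hx).derivWithin (hs x hx)

/-- The subinterval `Δ_j = [t_{j-1}, t_j]`. -/
abbrev cell (n j : ℕ) : Set ℝ :=
  Icc (((j : ℝ) - 1) / n) ((j : ℝ) / n)

/-- The index `j` of the subinterval `Δ_j` whose interpolant `Qn` uses at the point `s`. -/
noncomputable def cellIndex (n : ℕ) (s : ℝ) : ℕ :=
  min n (⌊s * n⌋₊ + 1)

lemma Qn_eq_eval_interpPoly (n r : ℕ) (x : ℝ → ℝ) (s : ℝ) :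
    Qn n r x s = (interpPoly n r (cellIndex n s) x).eval s :=
  rfl

lemma one_le_cellIndex {n : ℕ} (hn : 1 ≤ n) (s : ℝ) : 1 ≤ cellIndex n s :=
  le_min hn (Nat.le_add_left 1 _)

lemma cellIndex_le (n : ℕ) (s : ℝ) : cellIndex n s ≤ n :=
  min_le_left _ _

lemma mem_Icc_cellIndex {n : ℕ} (hn : 1 ≤ n) {s : ℝ} (hs : s ∈ Icc (0 : ℝ) 1) :
    s ∈ cell n (cellIndex n s) := by
  have hn0 : (0 : ℝ) < n := by exact_mod_cast hn
  have hfloor := Nat.floor_le (mul_nonneg hs.1 hn0.le)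
  have hfloor' := Nat.lt_floor_add_one (s * n)
  have hj : (cellIndex n s : ℝ) = min (n : ℝ) (⌊s * n⌋₊ + 1) := by
    simp [cellIndex]
  rw [cell, hj, mem_Icc, div_le_iff₀ hn0, le_div_iff₀ hn0]
  constructor
  · have := min_le_right (n : ℝ) (⌊s * n⌋₊ + 1)
    linarith
  · exact le_min (by nlinarith [hs.2]) hfloor'.le

lemma cell_subset_Icc {n j : ℕ} (hj : 1 ≤ j) (hjn : j ≤ n) : cell n j ⊆ Icc 0 1 := by
  have hj' : (1 : ℝ) ≤ j := by exact_mod_cast hj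
  have hjn' : (j : ℝ) ≤ n := by exact_mod_cast hjn
  exact Icc_subset_Icc (div_nonneg (by linarith) (Nat.cast_nonneg n))
    (div_le_one_of_le₀ hjn' (Nat.cast_nonneg n))

lemma tau_sub_tau (n r j i k : ℕ) :
    tau n r j i - tau n r j k = ((i : ℝ) - k) / (2 * r * n) := by
  simp only [tau]; ring

lemma one_div_le_abs_tau_sub_tau {n r j i k : ℕ} (hik : i ≠ k) :
    1 / (2 * r * n : ℝ) ≤ |tau n r j i - tau n r j k| := by
  rw [tau_sub_tau, abs_div, abs_of_nonneg (a := (2 * r * n : ℝ)) (by positivity)]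
  gcongr
  have : (1 : ℤ) ≤ |(i : ℤ) - k| := Int.one_le_abs (sub_ne_zero.2 (by exact_mod_cast hik))
  exact_mod_cast this

lemma tau_mem_Icc {n r i : ℕ} (j : ℕ) (hr : 1 ≤ r) (hn : 1 ≤ n) (hi : i ≤ 2 * r) :
    tau n r j i ∈ cell n j := by
  have hr' : (0 : ℝ) < r := by exact_mod_cast hr
  have hn' : (0 : ℝ) < n := by exact_mod_cast hn
  have hi' : (i : ℝ) ≤ 2 * r := by exact_mod_cast hi
  have hstep : (i : ℝ) / (2 * r * n) ≤ 1 / n := by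
    rw [div_le_div_iff₀ (by positivity) hn']
    nlinarith
  refine ⟨le_add_of_nonneg_right (by positivity), ?_⟩
  calc tau n r j i ≤ ((j : ℝ) - 1) / n + 1 / n := add_le_add_right hstep _
    _ = j / n := by ring

lemma abs_sub_eval_interpPoly_le {n r j : ℕ} (hr : 1 ≤ r) (hn : 1 ≤ n) {f : ℝ → ℝ} {M : ℝ}
    (hf : ContDiffOn ℝ (2 * r + 1 : ℕ) f (cell n j))
    (hM : ∀ x ∈ cell n j, |iteratedDerivWithin (2 * r + 1) f (cell n j) x| ≤ M)
    {s : ℝ} (hs : s ∈ cell n j) :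
    |f s - (interpPoly n r j f).eval s| ≤
      (1 + (2 * r + 1) * (2 * r) ^ (2 * r)) * M * (1 / n) ^ (2 * r + 1) := by
  have hr' : (0 : ℝ) < r := by exact_mod_cast hr
  have hn' : (0 : ℝ) < n := by exact_mod_cast hn
  have hlen : (j : ℝ) / n - ((j : ℝ) - 1) / n = 1 / n := by ring
  obtain ⟨P, hPdeg, hP⟩ := exists_degree_lt_abs_sub_eval_le (m := 2 * r)
    (by linarith [one_div_pos.2 hn']) hf hM
  rw [hlen] at hP
  have hnodes : ∀ i ∈ Finset.range (2 * r + 1), tau n r j i ∈ cell n j :=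
    fun i hi => tau_mem_Icc j hr hn (Nat.lt_succ_iff.1 (Finset.mem_range.1 hi))
  have hsep : ∀ i ∈ Finset.range (2 * r + 1), ∀ k ∈ Finset.range (2 * r + 1), i ≠ k →
      1 / (2 * r * n : ℝ) ≤ |tau n r j i - tau n r j k| :=
    fun _ _ _ _ hik => one_div_le_abs_tau_sub_tau hik
  have hinj : Set.InjOn (tau n r j) (Finset.range (2 * r + 1)) := by
    intro i hi k hk hik
    by_contra hne
    have := hsep i hi k hk hne
    rw [hik, sub_self, abs_zero] at this
    exact (not_le.2 (by positivity)) this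
  have hbasis : ∀ i ∈ Finset.range (2 * r + 1),
      |(Lagrange.basis (Finset.range (2 * r + 1)) (tau n r j) i).eval s| ≤ (2 * r) ^ (2 * r) := by
    intro i hi
    have hdist : ∀ k ∈ Finset.range (2 * r + 1), |s - tau n r j k| ≤ 1 / n := fun k hk => by
      have := hnodes k hk
      rw [abs_le]; constructor <;> linarith [hs.1, hs.2, this.1, this.2]
    convert abs_eval_basis_le (by positivity) hsep hdist hi using 2
    · field_simp
    · simp
  have := abs_sub_eval_interpolate_le hinj (by simpa using hPdeg) hnodes hs hP hbasis
  rw [interpPoly]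
  convert this using 1
  simp only [Finset.card_range]
  push_cast
  ring

lemma abs_sub_eval_interpPoly_le_of_hasDerivWithinAt {n r j : ℕ} (hr : 1 ≤ r) (hn : 1 ≤ n)
    (hj : 1 ≤ j) (hjn : j ≤ n) {g : ℕ → ℝ → ℝ} {M : ℝ}
    (hg : ∀ k < 2 * r + 1, ∀ x ∈ Icc (0 : ℝ) 1, HasDerivWithinAt (g k) (g (k + 1) x) (Icc 0 1) x)
    (hcont : ContinuousOn (g (2 * r + 1)) (Icc 0 1))
    (hM : ∀ x ∈ Icc (0 : ℝ) 1, |g (2 * r + 1) x| ≤ M)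
    {s : ℝ} (hs : s ∈ cell n j) :
    |g 0 s - (interpPoly n r j (g 0)).eval s| ≤
      (1 + (2 * r + 1) * (2 * r) ^ (2 * r)) * M * (1 / n) ^ (2 * r + 1) := by
  have hsub := cell_subset_Icc hj hjn
  have hU : UniqueDiffOn ℝ (cell n j) :=
    uniqueDiffOn_Icc (by gcongr; linarith)
  have hg' : ∀ k < 2 * r + 1, ∀ x ∈ cell n j, HasDerivWithinAt (g k) (g (k + 1) x) (cell n j) x :=
    fun k hk x hx => (hg k hk x (hsub hx)).mono hsub
  refine abs_sub_eval_interpPoly_le hr hn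
    (contDiffOn_of_hasDerivWithinAt_succ hU hg' (hcont.mono hsub)) (fun x hx => ?_) hs
  rw [iteratedDerivWithin_eqOn_of_hasDerivWithinAt_succ hU hg' _ le_rfl hx]
  exact hM x (hsub hx)

theorem stmt_14_general (r : ℕ) (hr : 1 ≤ r)
    (κ : ℝ → ℝ → ℝ) (κd : ℕ → ℕ → ℝ → ℝ → ℝ) (C₂ : ℝ) (hC₂ : 0 < C₂)
    (hκ0 : κd 0 0 = κ)
    (hds : ∀ α β : ℕ, α + β + 1 ≤ 2 * r + 3 → ∀ t ∈ Set.Icc (0:ℝ) 1, ∀ s ∈ Set.Icc (0:ℝ) 1,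
      HasDerivWithinAt (fun u => κd α β u t) (κd (α + 1) β s t) (Set.Icc 0 1) s)
    (hcont : ∀ α β : ℕ, α + β ≤ 2 * r + 3 →
      ContinuousOn (fun q : ℝ × ℝ => κd α β q.1 q.2) (Set.Icc 0 1 ×ˢ Set.Icc 0 1))
    (hbd : ∀ α β : ℕ, α + β ≤ 2 * r + 3 →
      ∀ s ∈ Set.Icc (0:ℝ) 1, ∀ t ∈ Set.Icc (0:ℝ) 1, |κd α β s t| ≤ C₂)
    :
    ∃ C : ℝ, 0 < C ∧
      ∀ n : ℕ, 1 ≤ n → ∀ ψ : ℝ → ℝ, ContinuousOn ψ (Set.Icc 0 1) →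
        supNorm (fun t => Kop κ (Kop κ ψ) t - Qn n r (Kop κ (Kop κ ψ)) t) ≤
          C * supNorm ψ * ((1 : ℝ) / n) ^ (2 * r + 1) := by
  subst hκ0
  refine ⟨(1 + (2 * r + 1) * (2 * r) ^ (2 * r)) * C₂ * C₂, by positivity, fun n hn ψ hψ => ?_⟩
  have hκ := hcont 0 0 (by omega)
  have hy := continuousOn_Kop hκ hψ
  have hybd : ∀ u ∈ Icc (0 : ℝ) 1, |Kop (κd 0 0) ψ u| ≤ C₂ * supNorm ψ := fun u hu =>
    abs_intervalIntegral_mul_le (hbd 0 0 (by omega) u hu) fun t ht => abs_le_supNorm hψ ht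
  refine supNorm_le (by have := supNorm_nonneg ψ; positivity) fun s hs => ?_
  have hj := one_le_cellIndex hn s
  have hjn := cellIndex_le n s
  have hsj := mem_Icc_cellIndex hn hs
  rw [Qn_eq_eval_interpPoly, interpPoly, Kop_sub_eval_interpolate hκ hy (fun i hi =>
    cell_subset_Icc hj hjn (tau_mem_Icc _ hr hn (Nat.lt_succ_iff.1 (Finset.mem_range.1 hi)))) hs]
  calc _ ≤ (1 + (2 * r + 1) * (2 * r) ^ (2 * r)) * C₂ * (1 / n) ^ (2 * r + 1) *
          (C₂ * supNorm ψ) := by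
        refine abs_intervalIntegral_mul_le (fun t ht => ?_) hybd
        exact abs_sub_eval_interpPoly_le_of_hasDerivWithinAt (g := fun k u => κd k 0 u t)
          hr hn hj hjn (fun k hk => hds k 0 (by omega) t ht)
          ((hcont _ 0 (by omega)).comp (continuous_id.prodMk continuous_const).continuousOn
            fun u hu => ⟨hu, ht⟩)
          (fun u hu => hbd _ 0 (by omega) u hu t ht) hsj
    _ = _ := by ring

/-- Lemma 4, first estimate: `‖K(Kψ) − Q_n(K(Kψ))‖_∞ ≤ C ‖ψ‖_∞ h^{2r+1}` with `C` independent of `n`. -/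
theorem stmt_14 (r : ℕ) (hr : 1 ≤ r)
    (κ : ℝ → ℝ → ℝ) (κd : ℕ → ℕ → ℝ → ℝ → ℝ) (C₂ : ℝ) (hC₂ : 0 < C₂)
    (hκ0 : κd 0 0 = κ)
    (hds : ∀ α β : ℕ, α + β + 1 ≤ 2 * r + 3 → ∀ t ∈ Set.Icc (0:ℝ) 1, ∀ s ∈ Set.Icc (0:ℝ) 1,
      HasDerivWithinAt (fun u => κd α β u t) (κd (α + 1) β s t) (Set.Icc 0 1) s)
    (hdt : ∀ α β : ℕ, α + β + 1 ≤ 2 * r + 3 → ∀ s ∈ Set.Icc (0:ℝ) 1, ∀ t ∈ Set.Icc (0:ℝ) 1,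
      HasDerivWithinAt (fun u => κd α β s u) (κd α (β + 1) s t) (Set.Icc 0 1) t)
    (hcont : ∀ α β : ℕ, α + β ≤ 2 * r + 3 →
      ContinuousOn (fun q : ℝ × ℝ => κd α β q.1 q.2) (Set.Icc 0 1 ×ˢ Set.Icc 0 1))
    (hbd : ∀ α β : ℕ, α + β ≤ 2 * r + 3 →
      ∀ s ∈ Set.Icc (0:ℝ) 1, ∀ t ∈ Set.Icc (0:ℝ) 1, |κd α β s t| ≤ C₂)
    :
    ∃ C : ℝ, 0 < C ∧
      ∀ n : ℕ, 1 ≤ n → ∀ ψ : ℝ → ℝ, ContinuousOn ψ (Set.Icc 0 1) →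
        supNorm (fun t => Kop κ (Kop κ ψ) t - Qn n r (Kop κ (Kop κ ψ)) t) ≤
          C * supNorm ψ * ((1 : ℝ) / n) ^ (2 * r + 1) :=
  stmt_14_general r hr κ κd C₂ hC₂ hκ0 hds hcont hbd
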